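/- arXiv:2103.00842 — 2 statements merged into one kernel-verified Lean document; each statement's English description precedes it below -/
import Mathlib

section
/- If κ ∈ Γ_m^+ with κ_1 ≥ ⋯ ≥ κ_n, then κ_i ≥ 0 for all 1 ≤ i ≤ m (the m largest entries are nonnegative). -/
open Finset

noncomputable def esym {n : ℕ} (m : ℕ) (κ : Fin n → ℝ) : ℝ :=
  ∑ s ∈ Finset.powersetCard m (Finset.univ : Finset (Fin n)), ∏ i ∈ s, κ i

/-!
A nonpositive entry `a` of a multiset can be discarded without losing positivity of
`σ_0, …, σ_m`, because `σ_{k+1}(rest) = σ_{k+1} - a σ_k(rest)`. Applied to a multiset of size `k`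
with `σ_1, …, σ_k > 0`, this would make `σ_k` of a multiset of size `k - 1` positive, so all its
entries are positive. If some `κ_i` with `i < m` were negative, every entry outside the first `m`
would be negative too; discarding them leaves the `m` largest entries with positive `σ_1, …, σ_m`,
so they are all positive, contradicting `κ_i < 0`.
-/

namespace Multiset

section CommSemiring

variable {R : Type*} [CommSemiring R]

theorem esymm_zero (s : Multiset R) : s.esymm 0 = 1 := by
  simp [esymm]

theorem esymm_eq_zero_of_card_lt {s : Multiset R} {k : ℕ} (h : card s < k) : s.esymm k = 0 := by
  simp [esymm, powersetCard_eq_empty k h]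

theorem esymm_cons_succ (a : R) (s : Multiset R) (k : ℕ) :
    (a ::ₘ s).esymm (k + 1) = s.esymm (k + 1) + a * s.esymm k := by
  simp [esymm, powersetCard_cons, map_map, sum_map_mul_left]

end CommSemiring

section OrderedRing

variable {R : Type*} [CommRing R] [LinearOrder R] [IsStrictOrderedRing R]

theorem esymm_pos_of_cons_of_nonpos {a : R} {s : Multiset R} {m : ℕ} (ha : a ≤ 0)
    (h : ∀ j ≤ m, 0 < (a ::ₘ s).esymm j) : ∀ j ≤ m, 0 < s.esymm j := by
  intro j hj
  induction j with
  | zero => simp [esymm_zero]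
  | succ k ih =>
    have hk := ih (by omega)
    have := h (k + 1) hj
    rw [esymm_cons_succ] at this
    linarith [mul_nonpos_of_nonpos_of_nonneg ha hk.le]

theorem esymm_pos_of_add_of_nonpos {s r : Multiset R} {m : ℕ} (hr : ∀ x ∈ r, x ≤ 0)
    (h : ∀ j ≤ m, 0 < (s + r).esymm j) : ∀ j ≤ m, 0 < s.esymm j := by
  induction r using Multiset.induction with
  | empty => simpa using h
  | cons a r ih =>
    refine ih (fun x hx => hr x (mem_cons_of_mem hx)) ?_
    rw [add_cons] at h
    exact esymm_pos_of_cons_of_nonpos (hr a (mem_cons_self a r)) h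

theorem pos_of_forall_esymm_pos {s : Multiset R} (h : ∀ j ≤ card s, 0 < s.esymm j) :
    ∀ x ∈ s, 0 < x := by
  intro x hx
  by_contra! hx0
  rw [← cons_erase hx] at h
  have := esymm_pos_of_cons_of_nonpos hx0 h (card (s.erase x) + 1) (by simp)
  rw [esymm_eq_zero_of_card_lt (Nat.lt_succ_self _)] at this
  exact lt_irrefl 0 this

end OrderedRing

end Multiset

namespace Finset

variable {ι R : Type*} [Fintype ι] [CommRing R] [LinearOrder R] [IsStrictOrderedRing R]

theorem pos_of_esymm_pos_of_nonpos_compl (κ : ι → R) (s : Finset ι) (hoff : ∀ j ∉ s, κ j ≤ 0)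
    (h : ∀ j ≤ #s, 0 < (univ.val.map κ).esymm j) : ∀ i ∈ s, 0 < κ i := by
  classical
  have hsplit := Multiset.filter_add_not (· ∈ s) (univ : Finset ι).val
  rw [← filter_val, filter_univ_mem] at hsplit
  intro i hi
  refine Multiset.pos_of_forall_esymm_pos (fun j hj => ?_) (κ i) (Multiset.mem_map_of_mem κ hi)
  refine Multiset.esymm_pos_of_add_of_nonpos (r := (univ.val.filter (· ∉ s)).map κ) ?_
    (by rwa [← Multiset.map_add, hsplit]) j (by simpa using hj)
  simp only [Multiset.mem_map, Multiset.mem_filter]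
  rintro _ ⟨j, ⟨-, hj⟩, rfl⟩
  exact hoff j hj

end Finset

theorem stmt_5_general {n : ℕ} (m : ℕ)
    (κ : Fin n → ℝ) (hΓ : ∀ j, 1 ≤ j → j ≤ m → 0 < esym j κ)
    (hsort : ∀ i j : Fin n, i ≤ j → κ j ≤ κ i) :
    ∀ i : Fin n, (i : ℕ) < m → 0 ≤ κ i := by
  intro i hi
  by_contra! hneg
  have hcard : #{j : Fin n | (j : ℕ) < m} ≤ m := Fin.card_filter_val_lt.trans_le (min_le_right n m)
  have hpos : ∀ j ≤ m, 0 < (univ.val.map κ).esymm j := by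
    intro j hj
    rcases Nat.eq_zero_or_pos j with rfl | hj1
    · simp [Multiset.esymm_zero]
    · rw [Finset.esymm_map_val]; exact hΓ j hj1 hj
  have hoff : ∀ j ∉ ({j | (j : ℕ) < m} : Finset (Fin n)), κ j ≤ 0 := fun j hj => by
    simp only [mem_filter, mem_univ, true_and, not_lt] at hj
    exact (hsort i j (by omega)).trans hneg.le
  have := Finset.pos_of_esymm_pos_of_nonpos_compl κ _ hoff
    (fun j hj => hpos j (hj.trans hcard)) i (by simpa using hi)
  linarith

/-- If κ ∈ Γ_m^+ with entries ordered decreasingly, the m largest entries are nonnegative. -/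
theorem stmt_5 {n : ℕ} (m : ℕ) (hm : 1 ≤ m) (hmn : m ≤ n)
    (κ : Fin n → ℝ) (hΓ : ∀ j, 1 ≤ j → j ≤ m → 0 < esym j κ)
    (hsort : ∀ i j : Fin n, i ≤ j → κ j ≤ κ i) :
    ∀ i : Fin n, (i : ℕ) < m → 0 ≤ κ i :=
  stmt_5_general m κ hΓ hsort
end

section
/- Let k ≥ 2 and suppose the function κ ↦ (σ_k(κ)/σ_1(κ))^{1/(k−1)} is concave on the cone Γ_k^+. Then for any κ ∈ Γ_k^+ and any vector ξ = (ξ_1,…,ξ_n) ∈ ℝ^n (representing derivatives ∇_i h_{pp} in a diagonal frame), one has Σ_{p,q} (∂²σ_k/∂κ_p∂κ_q)(κ) ξ_p ξ_q ≤ −σ_k(κ) · (S/σ_k − T/σ_1) · ( ((2−k)/(k−1)) S/σ_k − (k/(k−1)) T/σ_1 ), where S = Σ_p (∂σ_k/∂κ_p) ξ_p and T = Σ_p ξ_p. -/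
open Finset

noncomputable def esymRem {n : ℕ} (m : ℕ) (κ : Fin n → ℝ) (i : Fin n) : ℝ :=
  ∑ s ∈ Finset.powersetCard m ((Finset.univ : Finset (Fin n)).erase i), ∏ j ∈ s, κ j

/-- The `m`-th elementary symmetric polynomial with the entries `κ p` and `κ q` removed. -/
noncomputable def esymRem2 {n : ℕ} (m : ℕ) (κ : Fin n → ℝ) (p q : Fin n) : ℝ :=
  ∑ s ∈ Finset.powersetCard m (((Finset.univ : Finset (Fin n)).erase p).erase q),
    ∏ j ∈ s, κ j

/-!
Put `E t = σ_k (κ + t ξ)` and `L t = σ_1 (κ + t ξ)`; for small `t` the point stays in the open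
cone `Γ_k^+`. Then `E' 0 = S`, `E'' 0` is the Hessian form, and `L` is affine with slope `T`.
Since `(g ^ α)'' = α g ^ (α - 2) ((α - 1) g' ^ 2 + g g'')`, concavity of `g ^ α` for `g = E / L`,
`α = 1 / (k - 1)` forces `(α - 1) g' ^ 2 + g g'' ≤ 0` at `0`. Expanding `g'` and `g''` by the
quotient rule gives the bound, with `(2 - k) / (k - 1) = α - 1` and `k / (k - 1) = 1 + α`.
-/

open Filter Topology

/-- `esym`, `esymRem` and `esymRem2` are, by definition, `esymOn` of `univ`, `univ.erase i` and
`(univ.erase p).erase q`. -/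
noncomputable def esymOn {ι : Type*} (A : Finset ι) (m : ℕ) (x : ι → ℝ) : ℝ :=
  ∑ s ∈ A.powersetCard m, ∏ i ∈ s, x i

theorem Finset.sum_powersetCard_succ_sum_erase {α M : Type*} [DecidableEq α] [AddCommMonoid M]
    (A : Finset α) (m : ℕ) (g : α → Finset α → M) :
    ∑ s ∈ A.powersetCard (m + 1), ∑ i ∈ s, g i (s.erase i)
      = ∑ i ∈ A, ∑ u ∈ (A.erase i).powersetCard m, g i u := by
  rw [Finset.sum_sigma', Finset.sum_sigma']
  refine Finset.sum_bij' (fun p _ => ⟨p.2, p.1.erase p.2⟩) (fun p _ => ⟨insert p.1 p.2, p.1⟩)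
    ?_ ?_ ?_ ?_ ?_
  · rintro ⟨s, i⟩ h
    simp only [mem_sigma, mem_powersetCard] at h ⊢
    refine ⟨h.1.1 h.2, erase_subset_erase _ h.1.1, ?_⟩
    rw [card_erase_of_mem h.2, h.1.2, Nat.add_sub_cancel]
  · rintro ⟨i, u⟩ h
    simp only [mem_sigma, mem_powersetCard, subset_erase] at h ⊢
    exact ⟨⟨insert_subset h.1 h.2.1.1, by rw [card_insert_of_notMem h.2.1.2, h.2.2]⟩,
      mem_insert_self _ _⟩
  · rintro ⟨s, i⟩ h
    simp only [mem_sigma] at h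
    simp [insert_erase h.2]
  · rintro ⟨i, u⟩ h
    simp only [mem_sigma, mem_powersetCard, subset_erase] at h
    simp [erase_insert h.2.1.2]
  · intros
    rfl

theorem esymOn_zero {ι : Type*} (A : Finset ι) (x : ι → ℝ) : esymOn A 0 x = 1 := by
  simp [esymOn]

theorem hasDerivAt_esymOn_line {ι : Type*} [DecidableEq ι] (A : Finset ι) (m : ℕ)
    (x v : ι → ℝ) (t : ℝ) :
    HasDerivAt (fun t : ℝ => esymOn A (m + 1) (x + t • v))
      (∑ i ∈ A, esymOn (A.erase i) m (x + t • v) * v i) t := by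
  have hline : ∀ i, HasDerivAt (fun t : ℝ => (x + t • v) i) (v i) t := fun i => by
    simpa using ((hasDerivAt_id t).mul_const (v i)).const_add (x i)
  have := HasDerivAt.fun_sum fun s (_ : s ∈ A.powersetCard (m + 1)) =>
    HasDerivAt.fun_finsetProd (u := s) fun i _ => hline i
  refine this.congr_deriv ?_
  simp only [esymOn, smul_eq_mul, Finset.sum_mul]
  exact Finset.sum_powersetCard_succ_sum_erase A m (fun i u => (∏ j ∈ u, (x + t • v) j) * v i)

theorem ConcaveOn.comp_line {E : Type*} [AddCommGroup E] [Module ℝ E] {s : Set E} {f : E → ℝ}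
    (hf : ConcaveOn ℝ s f) (x v : E) :
    ConcaveOn ℝ {t : ℝ | x + t • v ∈ s} fun t => f (x + t • v) := by
  have hline : ∀ t : ℝ, AffineMap.lineMap x (x + v) t = x + t • v := fun t => by
    rw [AffineMap.lineMap_apply_module', add_sub_cancel_left, add_comm]
  simpa only [Set.preimage, Function.comp_def, hline] using
    hf.comp_affineMap (AffineMap.lineMap x (x + v))

theorem ConcaveOn.second_deriv_nonpos {U : Set ℝ} {f f' : ℝ → ℝ} {x c : ℝ}
    (hfc : ConcaveOn ℝ U f) (hU : U ∈ 𝓝 x) (hf : ∀ y ∈ U, HasDerivAt f (f' y) y)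
    (hf' : HasDerivAt f' c x) : c ≤ 0 := by
  have hanti : AntitoneOn f' U := by
    intro a ha b hb hab
    simpa only [(hf a ha).deriv, (hf b hb).deriv] using
      hfc.antitoneOn_deriv (fun y hy => (hf y hy).differentiableAt) ha hb hab
  have hacc : AccPt x (𝓟 U) := by
    simpa using (PerfectSpace.univ_preperfect x (Set.mem_univ x)).nhds_inter hU
  exact hf'.hasDerivWithinAt.nonpos_of_antitoneOn hacc hanti

theorem ConcaveOn.rpow_second_deriv_nonpos {U : Set ℝ} {g g' : ℝ → ℝ} {x g'' α : ℝ}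
    (hα : 0 < α) (hU : U ∈ 𝓝 x) (hgc : ConcaveOn ℝ U fun t => g t ^ α)
    (hpos : ∀ t ∈ U, 0 < g t) (hg : ∀ t ∈ U, HasDerivAt g (g' t) t) (hg' : HasDerivAt g' g'' x) :
    (α - 1) * g' x ^ 2 + g x * g'' ≤ 0 := by
  have hx : 0 < g x := hpos x (mem_of_mem_nhds hU)
  have hrpow : ∀ t ∈ U, HasDerivAt (fun t => g t ^ α) (g' t * α * g t ^ (α - 1)) t :=
    fun t ht => (hg t ht).rpow_const (Or.inl (hpos t ht).ne')
  have hrpow' := (hg'.mul_const α).mul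
    ((hg x (mem_of_mem_nhds hU)).rpow_const (p := α - 1) (Or.inl hx.ne'))
  have hnonpos := hgc.second_deriv_nonpos hU hrpow hrpow'
  have hfactor : g x ^ (α - 1) = g x ^ (α - 1 - 1) * g x := by
    rw [← Real.rpow_add_one hx.ne']
    ring_nf
  have hcoef : 0 < α * g x ^ (α - 1 - 1) := mul_pos hα (Real.rpow_pos_of_pos hx _)
  refine nonpos_of_mul_nonpos_right ?_ hcoef
  calc α * g x ^ (α - 1 - 1) * ((α - 1) * g' x ^ 2 + g x * g'')
      = g'' * α * g x ^ (α - 1) + g' x * α * (g' x * (α - 1) * g x ^ (α - 1 - 1)) := by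
        rw [hfactor]; ring
    _ ≤ 0 := hnonpos

theorem ConcaveOn.rpow_div_second_deriv_le {U : Set ℝ} {E E' L : ℝ → ℝ} {x Q T α : ℝ}
    (hα : 0 < α) (hU : U ∈ 𝓝 x) (hc : ConcaveOn ℝ U fun t => (E t / L t) ^ α)
    (hEpos : ∀ t ∈ U, 0 < E t) (hLpos : ∀ t ∈ U, 0 < L t)
    (hE : ∀ t ∈ U, HasDerivAt E (E' t) t) (hE' : HasDerivAt E' Q x)
    (hL : ∀ t, HasDerivAt L T t) :
    Q ≤ -E x * (E' x / E x - T / L x) * ((α - 1) * E' x / E x - (1 + α) * T / L x) := by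
  have hx : x ∈ U := mem_of_mem_nhds hU
  have hEx := hEpos x hx
  have hLx := hLpos x hx
  have hquot : ∀ t ∈ U, HasDerivAt (fun t => E t / L t)
      ((E' t * L t - E t * T) / L t ^ 2) t :=
    fun t ht => (hE t ht).div (hL t) (hLpos t ht).ne'
  have hquot' := ((hE'.fun_mul (hL x)).fun_sub ((hE x hx).mul_const T)).fun_div
    ((hL x).fun_pow 2) (pow_ne_zero 2 hLx.ne')
  have key := hc.rpow_second_deriv_nonpos hα hU (fun t ht => div_pos (hEpos t ht) (hLpos t ht))
    hquot hquot'
  rw [← sub_nonpos]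
  refine nonpos_of_mul_nonpos_right (le_of_eq_of_le ?_ key) (div_pos hEx (pow_pos hLx 2))
  field_simp
  ring

theorem isOpen_setOf_esym_pos {n : ℕ} (k : ℕ) :
    IsOpen {κ : Fin n → ℝ | ∀ j, 1 ≤ j → j ≤ k → 0 < esym j κ} := by
  have hcont : ∀ j, Continuous (esym (n := n) j) := fun j => by unfold esym; fun_prop
  have hset : {κ : Fin n → ℝ | ∀ j, 1 ≤ j → j ≤ k → 0 < esym j κ}
      = ⋂ j ∈ Finset.Icc 1 k, {κ | 0 < esym j κ} := by
    ext κ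
    simp
  rw [hset]
  exact isOpen_biInter_finset fun j _ => isOpen_lt continuous_const (hcont j)

theorem hasDerivAt_sum_esymRem_line {n : ℕ} (m : ℕ) (κ ξ : Fin n → ℝ) (t : ℝ) :
    HasDerivAt (fun t : ℝ => ∑ p, esymRem (m + 1) (κ + t • ξ) p * ξ p)
      (∑ p, ∑ q, (if p = q then 0 else esymRem2 m (κ + t • ξ) p q) * ξ p * ξ q) t := by
  refine HasDerivAt.fun_sum fun p _ =>
    ((hasDerivAt_esymOn_line (univ.erase p) m κ ξ t).mul_const (ξ p)).congr_deriv ?_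
  rw [Finset.sum_mul, ← Finset.add_sum_erase _ _ (mem_univ p), if_pos rfl, zero_mul, zero_mul,
    zero_add]
  refine Finset.sum_congr rfl fun q hq => ?_
  rw [if_neg (Ne.symm (ne_of_mem_erase hq))]
  simp only [esymRem2, esymOn]
  ring

theorem stmt_10_general {n : ℕ} (k : ℕ) (hk : 2 ≤ k)
    (hconc : ConcaveOn ℝ {κ' : Fin n → ℝ | ∀ j, 1 ≤ j → j ≤ k → 0 < esym j κ'}
      (fun κ' => (esym k κ' / esym 1 κ') ^ ((1 : ℝ) / ((k : ℝ) - 1))))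
    (κ : Fin n → ℝ) (hΓ : ∀ j, 1 ≤ j → j ≤ k → 0 < esym j κ) (ξ : Fin n → ℝ) :
    ∑ p, ∑ q, (if p = q then 0 else esymRem2 (k - 2) κ p q) * ξ p * ξ q
      ≤ - esym k κ
          * ((∑ p, esymRem (k - 1) κ p * ξ p) / esym k κ - (∑ p, ξ p) / esym 1 κ)
          * (((2 - (k : ℝ)) / ((k : ℝ) - 1)) * (∑ p, esymRem (k - 1) κ p * ξ p) / esym k κ
              - ((k : ℝ) / ((k : ℝ) - 1)) * (∑ p, ξ p) / esym 1 κ) := by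
  obtain ⟨m, rfl⟩ : ∃ m, k = m + 2 := ⟨k - 2, by omega⟩
  have hline : Continuous fun t : ℝ => κ + t • ξ := by fun_prop
  have hU : {t : ℝ | κ + t • ξ ∈ {κ' : Fin n → ℝ | ∀ j, 1 ≤ j → j ≤ m + 2 → 0 < esym j κ'}}
      ∈ 𝓝 0 :=
    ((isOpen_setOf_esym_pos (m + 2)).preimage hline).mem_nhds (by simpa using hΓ)
  have hσ₁ : ∀ t, HasDerivAt (fun t : ℝ => esym 1 (κ + t • ξ)) (∑ p, ξ p) t := fun t =>
    (hasDerivAt_esymOn_line univ 0 κ ξ t).congr_deriv (by simp [esymOn_zero])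
  have hk₁ : ((m + 2 : ℕ) : ℝ) - 1 = m + 1 := by push_cast; ring
  have hα : 0 < (1 : ℝ) / (((m + 2 : ℕ) : ℝ) - 1) := by rw [hk₁]; positivity
  have key := (hconc.comp_line κ ξ).rpow_div_second_deriv_le hα hU
    (fun t ht => ht (m + 2) (by omega) le_rfl) (fun t ht => ht 1 le_rfl (by omega))
    (fun t _ => hasDerivAt_esymOn_line univ (m + 1) κ ξ t)
    (hasDerivAt_sum_esymRem_line m κ ξ 0) hσ₁
  have hcoef₁ : (2 - ((m + 2 : ℕ) : ℝ)) / (((m + 2 : ℕ) : ℝ) - 1)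
      = 1 / (((m + 2 : ℕ) : ℝ) - 1) - 1 := by rw [hk₁]; push_cast; field_simp; ring
  have hcoef₂ : ((m + 2 : ℕ) : ℝ) / (((m + 2 : ℕ) : ℝ) - 1)
      = 1 + 1 / (((m + 2 : ℕ) : ℝ) - 1) := by rw [hk₁]; push_cast; field_simp; ring
  simp only [zero_smul, add_zero] at key
  rw [hcoef₁, hcoef₂]
  exact key

/-- Lemma 4.4: assuming concavity of (σ_k/σ_1)^{1/(k−1)} on Γ_k^+, the Hessian of σ_k
    (∂²σ_k/∂κ_p∂κ_q = σ_{k−2}(κ|pq) for p ≠ q, 0 for p = q) satisfies the stated bound. -/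
theorem stmt_10 {n : ℕ} (k : ℕ) (hk : 2 ≤ k) (hkn : k ≤ n)
    (hconc : ConcaveOn ℝ {κ' : Fin n → ℝ | ∀ j, 1 ≤ j → j ≤ k → 0 < esym j κ'}
      (fun κ' => (esym k κ' / esym 1 κ') ^ ((1 : ℝ) / ((k : ℝ) - 1))))
    (κ : Fin n → ℝ) (hΓ : ∀ j, 1 ≤ j → j ≤ k → 0 < esym j κ) (ξ : Fin n → ℝ) :
    ∑ p, ∑ q, (if p = q then 0 else esymRem2 (k - 2) κ p q) * ξ p * ξ q
      ≤ - esym k κ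
          * ((∑ p, esymRem (k - 1) κ p * ξ p) / esym k κ - (∑ p, ξ p) / esym 1 κ)
          * (((2 - (k : ℝ)) / ((k : ℝ) - 1)) * (∑ p, esymRem (k - 1) κ p * ξ p) / esym k κ
              - ((k : ℝ) / ((k : ℝ) - 1)) * (∑ p, ξ p) / esym 1 κ) :=
  stmt_10_general k hk hconc κ hΓ ξ
end
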